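/- Fix θ̄ ∈ (0,π/2). Then lim_{k→0⁺} [ 1/2 − (1 − 2·H(2θ(k)|k))/(2·cn(θ(k)|k)) ] = 1/2 − (π − 2θ̄)/(2π·cos θ̄), where θ(k) = θ̄·2K(k)/π. (The left-hand side is the probability, under the dimer Gibbs measure on the Fisher graph, that an edge of rhombus half-angle θ̄ occurs in the high-temperature polygon expansion of the Z-invariant Ising model with modulus k; the right-hand side is the known critical value at k = 0.) -/

import Mathlib

open Real Filter

/-- Complete elliptic integral of the first kind `K`, as a function of the
squared modulus `m = k²`. -/
noncomputable def ellK (m : ℝ) : ℝ :=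
  ∫ τ in (0:ℝ)..(π/2), 1 / Real.sqrt (1 - m * Real.sin τ ^ 2)

/-- The incomplete elliptic integral of the first kind
`φ ↦ ∫₀^φ (1 - k² sin² t)^{-1/2} dt`, as a function of the squared modulus `m = k²`. -/
noncomputable def amF (m φ : ℝ) : ℝ :=
  ∫ t in (0:ℝ)..φ, 1 / Real.sqrt (1 - m * Real.sin t ^ 2)

/-- Jacobi's amplitude, the inverse of `amF m`, squared modulus `m = k²`. -/
noncomputable def am (m u : ℝ) : ℝ := Function.invFun (amF m) u

/-- Jacobi elliptic function `sn`, squared modulus `m = k²`. -/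
noncomputable def sn (u m : ℝ) : ℝ := Real.sin (am m u)

/-- Jacobi elliptic function `cn`, squared modulus `m = k²`. -/
noncomputable def cn (u m : ℝ) : ℝ := Real.cos (am m u)

/-- Jacobi elliptic function `dn`, squared modulus `m = k²`. -/
noncomputable def dn (u m : ℝ) : ℝ := Real.sqrt (1 - m * sn u m ^ 2)

/-- Jacobi elliptic function `sc = sn/cn`, squared modulus `m = k²`. -/
noncomputable def sc (u m : ℝ) : ℝ := sn u m / cn u m

/-- Jacobi's epsilon function `E(u|k) = ∫₀ᵘ dn(v|k)² dv`, squared modulus `m = k²`. -/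
noncomputable def jacobiEps (m u : ℝ) : ℝ := ∫ v in (0:ℝ)..u, (dn v m) ^ 2

/-- The function `H(u|k) = (K'/π)(E(u/2|k) + ((E'-K')/K')·(u/2))`, where
`k' = √(1-k²)`, `K' = K(k')`, `E' = E(K'|k')`. -/
noncomputable def Hh (k u : ℝ) : ℝ :=
  (ellK (1 - k^2) / π) *
    (jacobiEps (k^2) (u/2) +
      ((jacobiEps (1 - k^2) (ellK (1 - k^2)) - ellK (1 - k^2)) / ellK (1 - k^2)) * (u/2))

/-!
As `k → 0` the modulus degenerates: `K → π/2`, so `θ(k) → θ̄`, and `√(1-k²)·u ≤ am(u|k) ≤ u`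
gives `cn(θ(k)|k) → cos θ̄`. In `H`, the bounds `(1-k²)·u ≤ E(u|k) ≤ u` make
`E(θ(k)|k) - θ(k) = O(k²)`, while the complementary `K'` blows up no faster than `π/(2k)`;
hence `K'·(E(θ(k)|k) - θ(k)) → 0` and `H(2θ(k)|k) → θ̄/π`, because `E' → 1`. That last limit
comes from the substitution `v = amF (k'²) φ`, which turns `E' = ∫₀^{K'} dn²` into
`∫₀^{π/2} √(cos² t + k² sin² t) dt`, squeezed between `1` and `1 + kπ/2`.
-/

open MeasureTheory intervalIntegral Topology Set

/-- The complete elliptic integral of the second kind `E`, squared modulus `m = k²`. -/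
noncomputable def ellE (m : ℝ) : ℝ :=
  ∫ τ in (0:ℝ)..(π / 2), √(1 - m * sin τ ^ 2)

lemma mul_sub_le_integral_of_le {f : ℝ → ℝ} {a b c : ℝ} (hab : a ≤ b)
    (hf : IntervalIntegrable f volume a b) (h : ∀ t, c ≤ f t) :
    c * (b - a) ≤ ∫ t in a..b, f t := by
  simpa [mul_comm] using integral_mono hab intervalIntegrable_const hf h

lemma integral_le_mul_sub_of_le {f : ℝ → ℝ} {a b c : ℝ} (hab : a ≤ b)
    (hf : IntervalIntegrable f volume a b) (h : ∀ t, f t ≤ c) :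
    ∫ t in a..b, f t ≤ c * (b - a) := by
  simpa [mul_comm] using integral_mono hab hf intervalIntegrable_const h

section Integrand

variable {m : ℝ}

lemma one_sub_mul_sin_sq_pos (hm : m < 1) (t : ℝ) : 0 < 1 - m * sin t ^ 2 := by
  rcases le_or_gt 0 m with h | h
  · nlinarith [sin_sq_le_one t]
  · nlinarith [sq_nonneg (sin t)]

lemma one_sub_le_one_sub_mul_sin_sq (hm : 0 ≤ m) (t : ℝ) : 1 - m ≤ 1 - m * sin t ^ 2 := by
  nlinarith [sin_sq_le_one t]

lemma one_sub_mul_sin_sq_le_one (hm : 0 ≤ m) (t : ℝ) : 1 - m * sin t ^ 2 ≤ 1 := by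
  nlinarith [sq_nonneg (sin t)]

lemma intervalIntegrable_sqrt_one_sub_mul_sin_sq (m a b : ℝ) :
    IntervalIntegrable (fun t => √(1 - m * sin t ^ 2)) volume a b :=
  (by fun_prop : Continuous fun t => √(1 - m * sin t ^ 2)).intervalIntegrable a b

lemma continuous_one_div_sqrt_one_sub_mul_sin_sq (hm : m < 1) :
    Continuous fun t => 1 / √(1 - m * sin t ^ 2) :=
  continuous_const.div (by fun_prop) fun t => (sqrt_pos.2 (one_sub_mul_sin_sq_pos hm t)).ne'

lemma one_le_one_div_sqrt_one_sub_mul_sin_sq (hm0 : 0 ≤ m) (hm1 : m < 1) (t : ℝ) :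
    1 ≤ 1 / √(1 - m * sin t ^ 2) :=
  one_le_one_div (sqrt_pos.2 (one_sub_mul_sin_sq_pos hm1 t))
    (sqrt_le_one.2 (one_sub_mul_sin_sq_le_one hm0 t))

lemma one_div_sqrt_one_sub_mul_sin_sq_le (hm0 : 0 ≤ m) (hm1 : m < 1) (t : ℝ) :
    1 / √(1 - m * sin t ^ 2) ≤ 1 / √(1 - m) :=
  one_div_le_one_div_of_le (sqrt_pos.2 (by linarith))
    (sqrt_le_sqrt (one_sub_le_one_sub_mul_sin_sq hm0 t))

end Integrand

section Amplitude

variable {m : ℝ}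

lemma hasDerivAt_amF (hm : m < 1) (φ : ℝ) :
    HasDerivAt (amF m) (1 / √(1 - m * sin φ ^ 2)) φ :=
  have hc := continuous_one_div_sqrt_one_sub_mul_sin_sq hm
  integral_hasDerivAt_right (hc.intervalIntegrable 0 φ)
    hc.aestronglyMeasurable.stronglyMeasurableAtFilter hc.continuousAt

lemma continuous_amF (hm : m < 1) : Continuous (amF m) :=
  continuous_iff_continuousAt.2 fun φ => (hasDerivAt_amF hm φ).continuousAt

lemma amF_strictMono (hm : m < 1) : StrictMono (amF m) :=
  strictMono_of_hasDerivAt_pos (hasDerivAt_amF hm) fun φ =>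
    one_div_pos.2 (sqrt_pos.2 (one_sub_mul_sin_sq_pos hm φ))

lemma amF_zero : amF m 0 = 0 := integral_same

lemma amF_sub_amF (hm : m < 1) (a b : ℝ) :
    amF m b - amF m a = ∫ t in a..b, 1 / √(1 - m * sin t ^ 2) :=
  have hc := continuous_one_div_sqrt_one_sub_mul_sin_sq hm
  integral_interval_sub_left (hc.intervalIntegrable _ _) (hc.intervalIntegrable _ _)

lemma sub_le_amF_sub (hm0 : 0 ≤ m) (hm1 : m < 1) {a b : ℝ} (hab : a ≤ b) :
    b - a ≤ amF m b - amF m a := by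
  rw [amF_sub_amF hm1]
  simpa using mul_sub_le_integral_of_le hab
    ((continuous_one_div_sqrt_one_sub_mul_sin_sq hm1).intervalIntegrable _ _)
    (one_le_one_div_sqrt_one_sub_mul_sin_sq hm0 hm1)

lemma amF_sub_le (hm0 : 0 ≤ m) (hm1 : m < 1) {a b : ℝ} (hab : a ≤ b) :
    amF m b - amF m a ≤ (b - a) / √(1 - m) := by
  rw [amF_sub_amF hm1, div_eq_inv_mul, ← one_div]
  exact integral_le_mul_sub_of_le hab
    ((continuous_one_div_sqrt_one_sub_mul_sin_sq hm1).intervalIntegrable _ _)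
    (one_div_sqrt_one_sub_mul_sin_sq_le hm0 hm1)

lemma amF_surjective (hm0 : 0 ≤ m) (hm1 : m < 1) : Function.Surjective (amF m) := by
  refine (continuous_amF hm1).surjective ?_ ?_
  · refine tendsto_atTop_mono' _ ?_ tendsto_id
    filter_upwards [eventually_ge_atTop 0] with φ hφ
    simpa [amF_zero] using sub_le_amF_sub hm0 hm1 hφ
  · refine tendsto_atBot_mono' _ ?_ tendsto_id
    filter_upwards [eventually_le_atBot 0] with φ hφ
    simpa [amF_zero] using sub_le_amF_sub hm0 hm1 hφ

lemma amF_am (hm0 : 0 ≤ m) (hm1 : m < 1) (u : ℝ) : amF m (am m u) = u :=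
  Function.invFun_eq (amF_surjective hm0 hm1 u)

lemma am_amF (hm : m < 1) (φ : ℝ) : am m (amF m φ) = φ :=
  Function.leftInverse_invFun (amF_strictMono hm).injective φ

lemma am_nonneg (hm0 : 0 ≤ m) (hm1 : m < 1) {u : ℝ} (hu : 0 ≤ u) : 0 ≤ am m u := by
  rwa [← (amF_strictMono hm1).le_iff_le, amF_am hm0 hm1, amF_zero]

lemma am_le_self (hm0 : 0 ≤ m) (hm1 : m < 1) {u : ℝ} (hu : 0 ≤ u) : am m u ≤ u := by
  simpa [amF_zero, amF_am hm0 hm1] using sub_le_amF_sub hm0 hm1 (am_nonneg hm0 hm1 hu)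

lemma sqrt_one_sub_mul_le_am (hm0 : 0 ≤ m) (hm1 : m < 1) {u : ℝ} (hu : 0 ≤ u) :
    √(1 - m) * u ≤ am m u := by
  have h := amF_sub_le hm0 hm1 (am_nonneg hm0 hm1 hu)
  rw [amF_am hm0 hm1, amF_zero, sub_zero, sub_zero, le_div_iff₀ (sqrt_pos.2 (by linarith))] at h
  linarith

end Amplitude

section Epsilon

variable {m : ℝ}

lemma dn_sq (hm : m < 1) (v : ℝ) : dn v m ^ 2 = 1 - m * sn v m ^ 2 :=
  sq_sqrt (one_sub_mul_sin_sq_pos hm _).le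

lemma jacobiEps_amF (hm : m < 1) (φ : ℝ) :
    jacobiEps m (amF m φ) = ∫ t in (0:ℝ)..φ, √(1 - m * sin t ^ 2) := by
  have h := integral_deriv_smul_comp_of_deriv_nonneg (a := 0) (b := φ)
    (g := fun v => dn v m ^ 2)
    (continuous_amF hm).continuousOn (fun t _ => hasDerivAt_amF hm t)
    (fun t _ => (one_div_pos.2 (sqrt_pos.2 (one_sub_mul_sin_sq_pos hm t))).le)
  rw [amF_zero] at h
  rw [jacobiEps, ← h]
  refine integral_congr fun t _ => ?_
  simp only [Function.comp_apply, smul_eq_mul, dn_sq hm, sn, am_amF hm]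
  rw [one_div, inv_mul_eq_div, div_sqrt]

lemma jacobiEps_le_self (hm0 : 0 ≤ m) (hm1 : m < 1) {u : ℝ} (hu : 0 ≤ u) :
    jacobiEps m u ≤ u := by
  calc jacobiEps m u = ∫ t in (0:ℝ)..am m u, √(1 - m * sin t ^ 2) := by
        rw [← jacobiEps_amF hm1, amF_am hm0 hm1]
    _ ≤ 1 * (am m u - 0) :=
        integral_le_mul_sub_of_le (am_nonneg hm0 hm1 hu) (intervalIntegrable_sqrt_one_sub_mul_sin_sq _ _ _)
          fun t => sqrt_le_one.2 (one_sub_mul_sin_sq_le_one hm0 t)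
    _ ≤ u := by linarith [am_le_self hm0 hm1 hu]

lemma one_sub_mul_le_jacobiEps (hm0 : 0 ≤ m) (hm1 : m < 1) {u : ℝ} (hu : 0 ≤ u) :
    (1 - m) * u ≤ jacobiEps m u := by
  calc (1 - m) * u = √(1 - m) * (√(1 - m) * u) := by
        rw [← mul_assoc, mul_self_sqrt (by linarith)]
    _ ≤ √(1 - m) * (am m u - 0) := by
        rw [sub_zero]
        exact mul_le_mul_of_nonneg_left (sqrt_one_sub_mul_le_am hm0 hm1 hu) (sqrt_nonneg _)
    _ ≤ ∫ t in (0:ℝ)..am m u, √(1 - m * sin t ^ 2) :=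
        mul_sub_le_integral_of_le (am_nonneg hm0 hm1 hu)
          (intervalIntegrable_sqrt_one_sub_mul_sin_sq _ _ _)
          fun t => sqrt_le_sqrt (one_sub_le_one_sub_mul_sin_sq hm0 t)
    _ = jacobiEps m u := by rw [← jacobiEps_amF hm1, amF_am hm0 hm1]

end Epsilon

section Complete

variable {m k : ℝ}

lemma ellK_eq_amF : ellK m = amF m (π / 2) := rfl

lemma ellK_nonneg (m : ℝ) : 0 ≤ ellK m :=
  integral_nonneg pi_div_two_pos.le fun _ _ => by positivity

lemma ellK_pos (hm : m < 1) : 0 < ellK m := by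
  simpa [ellK_eq_amF, amF_zero] using amF_strictMono hm pi_div_two_pos

lemma pi_div_two_le_ellK (hm0 : 0 ≤ m) (hm1 : m < 1) : π / 2 ≤ ellK m := by
  simpa [ellK_eq_amF, amF_zero] using sub_le_amF_sub hm0 hm1 pi_div_two_pos.le

lemma ellK_le (hm0 : 0 ≤ m) (hm1 : m < 1) : ellK m ≤ π / 2 / √(1 - m) := by
  simpa [ellK_eq_amF, amF_zero] using amF_sub_le hm0 hm1 pi_div_two_pos.le

lemma jacobiEps_ellK (hm : m < 1) : jacobiEps m (ellK m) = ellE m :=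
  jacobiEps_amF hm _

lemma ellK_one_sub_sq_le (hk0 : 0 < k) (hk1 : k ≤ 1) : ellK (1 - k ^ 2) ≤ π / 2 / k := by
  have h : ∀ t, 1 / √(1 - (1 - k ^ 2) * sin t ^ 2) ≤ 1 / k := fun t => by
    refine one_div_le_one_div_of_le hk0 (le_sqrt_of_sq_le ?_)
    nlinarith [mul_nonneg (sub_nonneg.2 (pow_le_one₀ hk0.le hk1 : k ^ 2 ≤ 1))
      (sub_nonneg.2 (sin_sq_le_one t))]
  have := integral_le_mul_sub_of_le pi_div_two_pos.le
    ((continuous_one_div_sqrt_one_sub_mul_sin_sq (by nlinarith)).intervalIntegrable _ _) h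
  rw [ellK]
  linarith [show 1 / k * (π / 2 - 0) = π / 2 / k by ring]

lemma one_le_ellE_one_sub_sq (k : ℝ) : 1 ≤ ellE (1 - k ^ 2) := by
  have h : ∀ t ∈ Icc 0 (π / 2), cos t ≤ √(1 - (1 - k ^ 2) * sin t ^ 2) := fun t ht => by
    refine le_sqrt_of_sq_le ?_
    nlinarith [sin_sq_add_cos_sq t, sq_nonneg (k * sin t)]
  have := integral_mono_on pi_div_two_pos.le intervalIntegrable_cos
    (intervalIntegrable_sqrt_one_sub_mul_sin_sq _ _ _) h
  rwa [integral_cos, sin_pi_div_two, sin_zero, sub_zero] at this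

lemma ellE_one_sub_sq_le (hk : 0 ≤ k) : ellE (1 - k ^ 2) ≤ 1 + k * (π / 2) := by
  have h : ∀ t ∈ Icc 0 (π / 2), √(1 - (1 - k ^ 2) * sin t ^ 2) ≤ cos t + k := fun t ht => by
    have hcos : 0 ≤ cos t := cos_nonneg_of_mem_Icc ⟨by linarith [ht.1, pi_pos], ht.2⟩
    refine sqrt_le_iff.2 ⟨by positivity, ?_⟩
    nlinarith [sin_sq_add_cos_sq t, sin_sq_le_one t, mul_nonneg hcos hk]
  have := integral_mono_on pi_div_two_pos.le (intervalIntegrable_sqrt_one_sub_mul_sin_sq _ _ _)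
    (intervalIntegrable_cos.add intervalIntegrable_const) h
  rw [integral_add intervalIntegrable_cos intervalIntegrable_const, integral_cos, sin_pi_div_two,
    sin_zero, intervalIntegral.integral_const, smul_eq_mul] at this
  rw [ellE]
  linarith

end Complete

section Limits

lemma tendsto_ellK_nhdsGE_zero : Tendsto ellK (𝓝[≥] 0) (𝓝 (π / 2)) := by
  have hsqrt : Tendsto (fun m : ℝ => √(1 - m)) (𝓝[≥] 0) (𝓝 1) := by
    simpa using ((continuous_const.sub continuous_id : Continuous fun m : ℝ => 1 - m).sqrt.tendsto
      0).mono_left nhdsWithin_le_nhds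
  have hm : ∀ᶠ m in 𝓝[≥] (0:ℝ), m ∈ Ico 0 1 := Ico_mem_nhdsGE zero_lt_one
  refine tendsto_of_tendsto_of_tendsto_of_le_of_le' tendsto_const_nhds
    (by simpa using tendsto_const_nhds.div hsqrt one_ne_zero) ?_ ?_
  · filter_upwards [hm] with m hm using pi_div_two_le_ellK hm.1 hm.2
  · filter_upwards [hm] with m hm using ellK_le hm.1 hm.2

lemma tendsto_am {α : Type*} {l : Filter α} {m u : α → ℝ} {u₀ : ℝ}
    (hm : Tendsto m l (𝓝[≥] 0)) (hu : Tendsto u l (𝓝 u₀)) (hu0 : ∀ᶠ x in l, 0 ≤ u x) :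
    Tendsto (fun x => am (m x) (u x)) l (𝓝 u₀) := by
  have hsqrt : Tendsto (fun x => √(1 - m x)) l (𝓝 1) := by
    simpa using ((tendsto_nhds_of_tendsto_nhdsWithin hm).const_sub 1).sqrt
  have hm' : ∀ᶠ x in l, m x ∈ Ico 0 1 := hm.eventually (Ico_mem_nhdsGE zero_lt_one)
  refine tendsto_of_tendsto_of_tendsto_of_le_of_le' (by simpa using hsqrt.mul hu) hu ?_ ?_
  · filter_upwards [hm', hu0] with x hm hu using sqrt_one_sub_mul_le_am hm.1 hm.2 hu
  · filter_upwards [hm', hu0] with x hm hu using am_le_self hm.1 hm.2 hu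

lemma tendsto_ellK_one_sub_sq_mul_sq :
    Tendsto (fun k => ellK (1 - k ^ 2) * k ^ 2) (𝓝[>] 0) (𝓝 0) := by
  have hk : Tendsto (fun k : ℝ => π / 2 * k) (𝓝[>] 0) (𝓝 0) :=
    ((continuous_const_mul _).tendsto' 0 0 (mul_zero _)).mono_left nhdsWithin_le_nhds
  refine tendsto_of_tendsto_of_tendsto_of_le_of_le' tendsto_const_nhds hk
    (Eventually.of_forall fun k => mul_nonneg (ellK_nonneg _) (sq_nonneg k)) ?_
  filter_upwards [Ioo_mem_nhdsGT zero_lt_one] with k hk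
  calc ellK (1 - k ^ 2) * k ^ 2 ≤ π / 2 / k * k ^ 2 :=
        mul_le_mul_of_nonneg_right (ellK_one_sub_sq_le hk.1 hk.2.le) (sq_nonneg k)
    _ = π / 2 * k := by field_simp

lemma tendsto_ellE_one_sub_sq : Tendsto (fun k => ellE (1 - k ^ 2)) (𝓝[>] 0) (𝓝 1) := by
  have hk : Tendsto (fun k : ℝ => 1 + k * (π / 2)) (𝓝[>] 0) (𝓝 1) :=
    ((by fun_prop : Continuous fun k : ℝ => 1 + k * (π / 2)).tendsto' 0 1 (by simp)).mono_left
      nhdsWithin_le_nhds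
  refine tendsto_of_tendsto_of_tendsto_of_le_of_le' tendsto_const_nhds hk
    (Eventually.of_forall one_le_ellE_one_sub_sq) ?_
  filter_upwards [self_mem_nhdsWithin] with k hk using ellE_one_sub_sq_le (le_of_lt hk)

lemma Hh_two_mul {k : ℝ} (hk : k ≠ 0) (u : ℝ) :
    Hh k (2 * u) =
      (ellK (1 - k ^ 2) * (jacobiEps (k ^ 2) u - u) + ellE (1 - k ^ 2) * u) / π := by
  have hm : 1 - k ^ 2 < 1 := sub_lt_self 1 (by positivity)
  rw [Hh, ← jacobiEps_ellK hm, mul_div_cancel_left₀ u two_ne_zero]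
  field_simp [(ellK_pos hm).ne', pi_ne_zero]
  ring

lemma tendsto_Hh_two_mul {u : ℝ → ℝ} {u₀ : ℝ} (hu : Tendsto u (𝓝[>] 0) (𝓝 u₀))
    (hu0 : ∀ᶠ k in 𝓝[>] 0, 0 ≤ u k) :
    Tendsto (fun k => Hh k (2 * u k)) (𝓝[>] 0) (𝓝 (u₀ / π)) := by
  have hk : ∀ᶠ k in 𝓝[>] (0:ℝ), k ∈ Ioo 0 1 := Ioo_mem_nhdsGT zero_lt_one
  have hA : Tendsto (fun k => ellK (1 - k ^ 2) * (jacobiEps (k ^ 2) (u k) - u k))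
      (𝓝[>] 0) (𝓝 0) := by
    refine tendsto_of_tendsto_of_tendsto_of_le_of_le'
      (by simpa using (tendsto_ellK_one_sub_sq_mul_sq.mul hu).neg) tendsto_const_nhds ?_ ?_
    · filter_upwards [hk, hu0] with k hk hu
      have hE := one_sub_mul_le_jacobiEps (sq_nonneg k) (by nlinarith [hk.1, hk.2]) hu
      nlinarith [mul_le_mul_of_nonneg_left hE (ellK_nonneg (1 - k ^ 2))]
    · filter_upwards [hk, hu0] with k hk hu
      exact mul_nonpos_of_nonneg_of_nonpos (ellK_nonneg _)
        (sub_nonpos.2 (jacobiEps_le_self (sq_nonneg k) (by nlinarith [hk.1, hk.2]) hu))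
  have h := (hA.add (tendsto_ellE_one_sub_sq.mul hu)).div_const π
  rw [zero_add, one_mul] at h
  refine h.congr' ?_
  filter_upwards [hk] with k hk using (Hh_two_mul hk.1.ne' (u k)).symm

end Limits

/-- The probability that an edge of rhombus half-angle `θ̄` occurs in the
high-temperature polygon expansion of the Z-invariant Ising model with modulus `k`
converges, as `k → 0⁺`, to the critical value `1/2 - (π-2θ̄)/(2π cos θ̄)`:
`1/2 - (1 - 2H(2θ(k)|k))/(2 cn(θ(k)|k)) → 1/2 - (π-2θ̄)/(2π cos θ̄)`,
where `θ(k) = θ̄·2K(k)/π`. -/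
theorem edge_probability_critical_limit (θbar : ℝ) (hθ : θbar ∈ Set.Ioo 0 (π / 2)) :
    Filter.Tendsto
      (fun k : ℝ => 1 / 2 -
        (1 - 2 * Hh k (2 * (θbar * (2 * ellK (k ^ 2)) / π))) /
          (2 * cn (θbar * (2 * ellK (k ^ 2)) / π) (k ^ 2)))
      (nhdsWithin 0 (Set.Ioi 0))
      (nhds (1 / 2 - (π - 2 * θbar) / (2 * π * Real.cos θbar))) := by
  have hsq : Tendsto (fun k : ℝ => k ^ 2) (𝓝[>] 0) (𝓝[≥] 0) :=
    tendsto_nhdsWithin_iff.2 ⟨((continuous_pow 2).tendsto' 0 0 (by simp)).mono_left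
      nhdsWithin_le_nhds, Eventually.of_forall sq_nonneg⟩
  have hθk : Tendsto (fun k : ℝ => θbar * (2 * ellK (k ^ 2)) / π) (𝓝[>] 0) (𝓝 θbar) := by
    have hK : Tendsto (fun k : ℝ => ellK (k ^ 2)) (𝓝[>] 0) (𝓝 (π / 2)) :=
      tendsto_ellK_nhdsGE_zero.comp hsq
    convert ((hK.const_mul 2).const_mul θbar).div_const π using 2
    field_simp
  have hθk_nonneg : ∀ᶠ k in 𝓝[>] (0:ℝ), 0 ≤ θbar * (2 * ellK (k ^ 2)) / π :=
    Eventually.of_forall fun k =>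
      div_nonneg (mul_nonneg hθ.1.le (mul_nonneg zero_le_two (ellK_nonneg _))) pi_pos.le
  have hcn : Tendsto (fun k : ℝ => cn (θbar * (2 * ellK (k ^ 2)) / π) (k ^ 2)) (𝓝[>] 0)
      (𝓝 (cos θbar)) :=
    (continuous_cos.tendsto θbar).comp (tendsto_am hsq hθk hθk_nonneg)
  have hH := tendsto_Hh_two_mul hθk hθk_nonneg
  have hcos : cos θbar ≠ 0 := (cos_pos_of_mem_Ioo ⟨by linarith [hθ.1, pi_pos], hθ.2⟩).ne'
  have h := (tendsto_const_nhds (x := (1 / 2 : ℝ))).sub (((tendsto_const_nhds (x := (1 : ℝ))).sub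
    (hH.const_mul 2)).div (hcn.const_mul 2) (mul_ne_zero two_ne_zero hcos))
  have hlim : 1 / 2 - (1 - 2 * (θbar / π)) / (2 * cos θbar) =
      1 / 2 - (π - 2 * θbar) / (2 * π * cos θbar) := by
    field_simp
  rw [hlim] at h
  exact h
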